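/- Let L be a b×b strictly lower triangular random matrix with jointly independent entries below the diagonal satisfying E[l_{ij}] = 0, E[l_{ij}^2] = 1, E[l_{ij}^4] = 3. Then E[tr(L Lᵀ L Lᵀ)] = (4b^3 − 3b^2 − b)/6. -/

import Mathlib

open MeasureTheory ProbabilityTheory Matrix Finset

/-!
Expanding the trace, `tr (L Lᵀ L Lᵀ) = ∑ i k j l, L i j * L k j * L k l * L i l`. By independence
and centring, each term has the expectation Wick's formula gives for Gaussian entries: a sum
over the three pairings of the four factors, a pairing contributing `1` when the paired positions
coincide and lie strictly below the diagonal. The pairing forcing `i = k` contributes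
`∑ i, i ^ 2`, the one forcing `j = l` contributes `∑ j, (b - 1 - j) ^ 2`, which is the same sum
reversed, and the one forcing both contributes `∑ i, i`; finally
`∑ i < b, (2 i ^ 2 + i) = (4 b ^ 3 - 3 b ^ 2 - b) / 6`.
-/

instance : ENNReal.HolderTriple 4 4 2 where
  inv_add_inv_eq_inv := by
    rw [← two_mul, show (4 : ENNReal) = 2 * 2 by norm_num, ENNReal.mul_inv (by simp) (by simp),
      ← mul_assoc, ENNReal.mul_inv_cancel (by simp) (by simp), one_mul]

section Moments

variable {Ω : Type*} [MeasurableSpace Ω] {μ : Measure Ω}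

lemma memLp_four_of_integrable_pow_four {f : Ω → ℝ} (hf : AEStronglyMeasurable f μ)
    (h : Integrable (fun ω => f ω ^ 4) μ) : MemLp f 4 μ := by
  rw [← integrable_norm_rpow_iff hf (by norm_num) (by norm_num)]
  convert h using 2 with ω
  rw [show (4 : ENNReal).toReal = ((4 : ℕ) : ℝ) by norm_num, Real.rpow_natCast, Real.norm_eq_abs,
    pow_abs, abs_of_nonneg (by positivity)]

lemma MeasureTheory.MemLp.integrable_mul_mul_mul {a b c d : Ω → ℝ} (ha : MemLp a 4 μ)
    (hb : MemLp b 4 μ) (hc : MemLp c 4 μ) (hd : MemLp d 4 μ) :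
    Integrable (fun ω => a ω * b ω * (c ω * d ω)) μ :=
  (hb.mul' (r := 2) ha).integrable_mul (hd.mul' (r := 2) hc)

variable {ι : Type*} {X : ι → Ω → ℝ}

lemma ProbabilityTheory.iIndepFun.integral_sq_mul_sq (hX : iIndepFun X μ)
    (hmeas : ∀ p, Measurable (X p)) {p q : ι} (hpq : p ≠ q) :
    ∫ ω, X p ω ^ 2 * X q ω ^ 2 ∂μ = (∫ ω, X p ω ^ 2 ∂μ) * ∫ ω, X q ω ^ 2 ∂μ :=
  ((hX.indepFun hpq).comp (measurable_id.pow_const 2) (measurable_id.pow_const 2)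
    ).integral_fun_mul_eq_mul_integral ((hmeas p).pow_const 2).aestronglyMeasurable
    ((hmeas q).pow_const 2).aestronglyMeasurable

lemma ProbabilityTheory.iIndepFun.integral_mul_mul_mul_eq_zero (hX : iIndepFun X μ)
    (hmeas : ∀ p, Measurable (X p)) {p q r s : ι} (hpq : p ≠ q) (hpr : p ≠ r) (hps : p ≠ s)
    (hqr : q ≠ r) (hqs : q ≠ s) (hp : ∫ ω, X p ω ∂μ = 0) :
    ∫ ω, X p ω * X q ω * (X r ω * X s ω) ∂μ = 0 := by
  have hpq_int : ∫ ω, X p ω * X q ω ∂μ = 0 := by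
    rw [(hX.indepFun hpq).integral_fun_mul_eq_mul_integral (hmeas p).aestronglyMeasurable
      (hmeas q).aestronglyMeasurable, hp, zero_mul]
  have := (hX.indepFun_mul_mul hmeas p q r s hpr hps hqr hqs).integral_fun_mul_eq_mul_integral
    ((hmeas p).mul (hmeas q)).aestronglyMeasurable ((hmeas r).mul (hmeas s)).aestronglyMeasurable
  simp only [Pi.mul_apply] at this
  rw [this, hpq_int, zero_mul]

end Moments

theorem Matrix.trace_mul_transpose_mul_mul_transpose {n R : Type*} [Fintype n] [CommSemiring R]
    (A : Matrix n n R) :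
    trace (A * Aᵀ * (A * Aᵀ)) = ∑ i, ∑ k, ∑ j, ∑ l, A i j * A k j * (A k l * A i l) := by
  simp only [trace, diag_apply, mul_apply, transpose_apply, sum_mul, mul_sum]
  exact sum_congr rfl fun i _ => sum_congr rfl fun k _ => sum_comm

/-- Wick's formula for `E[L i j * L k j * L k l * L i l]`, one summand per pairing of the four
factors. -/
def lowerWickWeight {b : ℕ} (i k j l : Fin b) : ℝ :=
  (if i = k ∧ j < i ∧ l < i then 1 else 0) + (if j = l ∧ j < i ∧ j < k then 1 else 0) +
    (if i = k ∧ j = l ∧ j < i then 1 else 0)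

section LowerTriangular

variable {Ω : Type*} [MeasureSpace Ω] {b : ℕ} {L : Ω → Matrix (Fin b) (Fin b) ℝ}
    (hmeas : ∀ i j, Measurable fun ω => L ω i j)
    (hlow : ∀ ω, ∀ i j : Fin b, i ≤ j → L ω i j = 0)
    (hindep : iIndepFun
      (fun p : {p : Fin b × Fin b // p.2 < p.1} => fun ω => L ω p.1.1 p.1.2) ℙ)
    (hmean : ∀ i j : Fin b, j < i → ∫ ω, L ω i j = 0)
    (hvar : ∀ i j : Fin b, j < i → ∫ ω, (L ω i j) ^ 2 = 1)
    (hfourth : ∀ i j : Fin b, j < i → ∫ ω, (L ω i j) ^ 4 = 3)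
include hmeas hlow hfourth

lemma memLp_four_entry (i j : Fin b) : MemLp (fun ω => L ω i j) 4 := by
  by_cases hji : j < i
  · exact memLp_four_of_integrable_pow_four (hmeas i j).aestronglyMeasurable
      (.of_integral_ne_zero (by simp [hfourth i j hji]))
  · simp [hlow _ i j (not_lt.mp hji)]

include hindep hmean hvar in
theorem integral_entry_mul_mul_mul (i k j l : Fin b) :
    ∫ ω, L ω i j * L ω k j * (L ω k l * L ω i l) = lowerWickWeight i k j l := by
  by_cases hlt : j < i ∧ j < k ∧ l < i ∧ l < k
  swap
  · have hzero : ∀ ω, L ω i j * L ω k j * (L ω k l * L ω i l) = 0 := fun ω => by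
      simp only [not_and_or, not_lt] at hlt
      rcases hlt with h | h | h | h <;> simp [hlow ω _ _ h]
    have hweight : lowerWickWeight i k j l = 0 := by
      unfold lowerWickWeight
      split_ifs <;> grind
    simp [hzero, hweight]
  obtain ⟨hji, hjk, hli, hlk⟩ := hlt
  have hmeasX : ∀ p : {p : Fin b × Fin b // p.2 < p.1}, Measurable fun ω => L ω p.1.1 p.1.2 :=
    fun p => hmeas _ _
  rcases eq_or_ne i k with rfl | hik <;> rcases eq_or_ne j l with rfl | hjl
  · calc _ = ∫ ω, L ω i j ^ 4 := by congr with ω; ring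
      _ = _ := by norm_num [lowerWickWeight, hfourth i j hji, hji]
  · calc _ = ∫ ω, L ω i j ^ 2 * L ω i l ^ 2 := by congr with ω; ring
      _ = (∫ ω, L ω i j ^ 2) * ∫ ω, L ω i l ^ 2 :=
        hindep.integral_sq_mul_sq hmeasX (p := ⟨(i, j), hji⟩) (q := ⟨(i, l), hli⟩) (by simp [hjl])
      _ = _ := by simp [lowerWickWeight, hvar i j hji, hvar i l hli, hji, hli, hjl]
  · calc _ = ∫ ω, L ω i j ^ 2 * L ω k j ^ 2 := by congr with ω; ring
      _ = (∫ ω, L ω i j ^ 2) * ∫ ω, L ω k j ^ 2 :=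
        hindep.integral_sq_mul_sq hmeasX (p := ⟨(i, j), hji⟩) (q := ⟨(k, j), hjk⟩) (by simp [hik])
      _ = _ := by simp [lowerWickWeight, hvar i j hji, hvar k j hjk, hji, hjk, hik]
  · calc _ = 0 := hindep.integral_mul_mul_mul_eq_zero hmeasX (p := ⟨(i, j), hji⟩)
          (q := ⟨(k, j), hjk⟩) (r := ⟨(k, l), hlk⟩) (s := ⟨(i, l), hli⟩) (by simp [hik])
          (by simp [hik]) (by simp [hjl]) (by simp [hjl]) (by simp [hik.symm]) (hmean i j hji)
      _ = _ := by simp [lowerWickWeight, hik, hjl]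

end LowerTriangular

lemma sum_range_two_mul_sq_add (b : ℕ) :
    ∑ i ∈ range b, (2 * (i : ℝ) ^ 2 + i) = (4 * (b : ℝ) ^ 3 - 3 * (b : ℝ) ^ 2 - (b : ℝ)) / 6 := by
  induction b with
  | zero => simp
  | succ m ih => rw [sum_range_succ, ih]; push_cast; ring

lemma sum_lowerWickWeight (b : ℕ) :
    ∑ i : Fin b, ∑ k, ∑ j, ∑ l, lowerWickWeight i k j l =
      (4 * (b : ℝ) ^ 3 - 3 * (b : ℝ) ^ 2 - (b : ℝ)) / 6 := by
  have h₁ : ∑ i : Fin b, ∑ k, ∑ j, ∑ l, (if i = k ∧ j < i ∧ l < i then (1 : ℝ) else 0) =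
      ∑ i : Fin b, (i : ℝ) ^ 2 := by
    simp [ite_and, sum_ite_irrel, sum_boole, filter_gt_eq_Iio, sq, ← sum_filter]
  have h₂ : ∑ i : Fin b, ∑ k, ∑ j, ∑ l, (if j = l ∧ j < i ∧ j < k then (1 : ℝ) else 0) =
      ∑ j : Fin b, (#(Ioi j) : ℝ) ^ 2 := by
    simp only [ite_and, sum_ite_eq, mem_univ, if_true]
    rw [sum_comm_cycle]
    simp [sum_ite_irrel, sum_boole, filter_lt_eq_Ioi, sq, ← sum_filter]
  have h₃ : ∑ i : Fin b, ∑ k, ∑ j, ∑ l, (if i = k ∧ j = l ∧ j < i then (1 : ℝ) else 0) =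
      ∑ i : Fin b, (i : ℝ) := by
    simp [ite_and, sum_ite_irrel, sum_boole, filter_gt_eq_Iio]
  have hrev : ∑ j : Fin b, (#(Ioi j) : ℝ) ^ 2 = ∑ j : Fin b, (j : ℝ) ^ 2 := by
    rw [← Equiv.sum_comp Fin.revPerm]
    refine sum_congr rfl fun j _ => ?_
    simp only [Fin.revPerm_apply, Fin.card_Ioi, Fin.val_rev]
    congr 3
    omega
  simp only [lowerWickWeight, sum_add_distrib, h₁, h₂, h₃, hrev]
  rw [← sum_range_two_mul_sq_add, ← Fin.sum_univ_eq_sum_range (fun i => 2 * (i : ℝ) ^ 2 + i),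
    sum_add_distrib, ← mul_sum]
  ring

theorem expectation_trace_LLTLLT_general
    {Ω : Type*} [MeasureSpace Ω]
    (b : ℕ) (L : Ω → Matrix (Fin b) (Fin b) ℝ)
    (hmeas : ∀ i j, Measurable fun ω => L ω i j)
    (hlow : ∀ ω, ∀ i j : Fin b, i ≤ j → L ω i j = 0)
    (hindep : iIndepFun
      (fun p : {p : Fin b × Fin b // p.2 < p.1} => fun ω => L ω p.1.1 p.1.2) ℙ)
    (hmean : ∀ i j : Fin b, j < i → ∫ ω, L ω i j = 0)
    (hvar : ∀ i j : Fin b, j < i → ∫ ω, (L ω i j) ^ 2 = 1)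
    (hfourth : ∀ i j : Fin b, j < i → ∫ ω, (L ω i j) ^ 4 = 3) :
    ∫ ω, Matrix.trace (L ω * (L ω)ᵀ * (L ω * (L ω)ᵀ))
      = (4 * (b : ℝ) ^ 3 - 3 * (b : ℝ) ^ 2 - (b : ℝ)) / 6 := by
  have hL := memLp_four_entry hmeas hlow hfourth
  have hint : ∀ i k j l, Integrable fun ω => L ω i j * L ω k j * (L ω k l * L ω i l) :=
    fun i k j l => (hL i j).integrable_mul_mul_mul (hL k j) (hL k l) (hL i l)
  simp_rw [trace_mul_transpose_mul_mul_transpose]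
  simp (disch := fun_prop (disch := exact hint _ _ _ _)) only [integral_finsetSum]
  simp only [integral_entry_mul_mul_mul hmeas hlow hindep hmean hvar hfourth, sum_lowerWickWeight]

/-- For a b×b strictly lower triangular random matrix with independent entries below
the diagonal matching Gaussian second and fourth moments,
E[tr(L Lᵀ L Lᵀ)] = (4b³−3b²−b)/6. -/
theorem expectation_trace_LLTLLT
    {Ω : Type*} [MeasureSpace Ω] [IsProbabilityMeasure (ℙ : Measure Ω)]
    (b : ℕ) (L : Ω → Matrix (Fin b) (Fin b) ℝ)
    (hmeas : ∀ i j, Measurable fun ω => L ω i j)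
    (hlow : ∀ ω, ∀ i j : Fin b, i ≤ j → L ω i j = 0)
    (hindep : iIndepFun
      (fun p : {p : Fin b × Fin b // p.2 < p.1} => fun ω => L ω p.1.1 p.1.2) ℙ)
    (hmean : ∀ i j : Fin b, j < i → ∫ ω, L ω i j = 0)
    (hvar : ∀ i j : Fin b, j < i → ∫ ω, (L ω i j) ^ 2 = 1)
    (hfourth : ∀ i j : Fin b, j < i → ∫ ω, (L ω i j) ^ 4 = 3) :
    ∫ ω, Matrix.trace (L ω * (L ω)ᵀ * (L ω * (L ω)ᵀ))
      = (4 * (b : ℝ) ^ 3 - 3 * (b : ℝ) ^ 2 - (b : ℝ)) / 6 :=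
  expectation_trace_LLTLLT_general b L hmeas hlow hindep hmean hvar hfourth
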